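/- arXiv:2512.08377 — 2 statements merged into one kernel-verified Lean document; each statement's English description precedes it below -/
import Mathlib

section
/- For all positive integers p, the coefficient of z^{2p} in (1-z)^{2p-1}(1+z)^{2p} equals (-1)^p C(2p-1, p). Equivalently, the Kravchuk polynomial K(2p, 2p-1; 4p-1) = ∑_{j=0}^{2p} (-1)^j C(2p-1, j) C(2p, 2p-j) equals (-1)^p C(2p-1, p). -/
open Polynomial

lemma coeff_one_sub_X_pow (n k : ℕ) :
    ((1 - X : ℤ[X]) ^ n).coeff k = (-1) ^ k * (n.choose k : ℤ) := by
  have h0 : (1 - X : ℤ[X]) = C (-1) * (X + C (-1)) := by simp; ring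
  rw [h0, mul_pow, ← C_pow, coeff_C_mul, coeff_X_add_C_pow]
  rcases le_or_gt k n with hk | hk
  · have h2 : n + (n - k) = 2*(n-k) + k := by omega
    rw [← mul_assoc, ← pow_add, h2, pow_add, pow_mul, neg_one_sq, one_pow, one_mul]
  · simp [Nat.choose_eq_zero_of_lt hk]

lemma one_sub_X_sq (n : ℕ) :
    (1 - X^2 : ℤ[X]) ^ n = Polynomial.expand ℤ 2 ((1 - X : ℤ[X]) ^ n) := by
  rw [map_pow, map_sub, map_one, Polynomial.expand_X]

theorem stmt_3 (p : ℕ) (hp : 0 < p) :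
    ((1 - X : ℤ[X]) ^ (2 * p - 1) * (1 + X) ^ (2 * p)).coeff (2 * p) =
        (-1 : ℤ) ^ p * ((2 * p - 1).choose p : ℤ) ∧
    ∑ j ∈ Finset.range (2 * p + 1),
        (-1 : ℤ) ^ j * ((2 * p - 1).choose j) * ((2 * p).choose (2 * p - j)) =
      (-1) ^ p * ((2 * p - 1).choose p) := by
  have key : ((1 - X : ℤ[X]) ^ (2 * p - 1) * (1 + X) ^ (2 * p)).coeff (2 * p) =
      (-1 : ℤ) ^ p * ((2 * p - 1).choose p : ℤ) := by
    have h1 : (1 - X : ℤ[X]) ^ (2 * p - 1) * (1 + X) ^ (2 * p) =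
        (1 - X^2 : ℤ[X]) ^ (2 * p - 1) * (1 + X) := by
      have hx : (1 + X : ℤ[X]) ^ (2 * p) = (1 + X) ^ (2 * p - 1) * (1 + X) := by
        rw [← pow_succ]; congr 1; omega
      rw [hx, ← mul_assoc, ← mul_pow]; ring_nf
    have h2 : ((1 - X^2 : ℤ[X]) ^ (2 * p - 1) * X).coeff (2 * p) =
        ((1 - X^2 : ℤ[X]) ^ (2 * p - 1)).coeff (2 * p - 1) := by
      have h3 : 2 * p = (2 * p - 1) + 1 := by omega
      conv_lhs => rw [h3]
      rw [coeff_mul_X]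
      norm_num
    rw [h1, mul_add, mul_one, coeff_add, h2, one_sub_X_sq,
      Polynomial.coeff_expand (by norm_num : 0 < 2),
      Polynomial.coeff_expand (by norm_num : 0 < 2)]
    have hdvd : 2 ∣ 2 * p := Dvd.intro p rfl
    have hnd : ¬ (2 ∣ 2 * p - 1) := by omega
    rw [if_pos hdvd, if_neg hnd, add_zero, Nat.mul_div_cancel_left p (by norm_num),
      coeff_one_sub_X_pow]
  refine ⟨key, ?_⟩
  rw [← key, coeff_mul, Finset.Nat.sum_antidiagonal_eq_sum_range_succ
    (fun a b => ((1 - X : ℤ[X]) ^ (2 * p - 1)).coeff a * ((1 + X : ℤ[X]) ^ (2 * p)).coeff b)]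
  refine Finset.sum_congr rfl fun j _ => ?_
  rw [coeff_one_sub_X_pow, coeff_one_add_X_pow, mul_assoc]
end

section
/- For all positive integers p: (2p-1) K(2p+1, 2p+1; 4p-1) = (3-2p)(-1)^p C(2p-1,p), K(2p+1, 2p+1; 4p) = -2·(-1)^p C(2p-1,p), K(2p+1, 2p+1; 4p+1) = -2·(-1)^p C(2p-1,p), and K(2p+1, 2p+1; 4p+2) = 0. -/
open Polynomial

/-- The Kravchuk polynomial `K(a, b; n)`: the coefficient of `z^a` in
`(1+z)^(n-b) * (1-z)^b`. -/
noncomputable def kravchuk (a b n : ℕ) : ℤ :=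
  ((1 + X : ℤ[X]) ^ (n - b) * (1 - X) ^ b).coeff a

lemma coeff_one_sub_X_sq_pow (m k : ℕ) :
    ((1 - X ^ 2 : ℤ[X]) ^ m).coeff k =
      if k % 2 = 0 then (-1) ^ (k / 2) * ((m.choose (k / 2) : ℤ)) else 0 := by
  have h : (1 - X ^ 2 : ℤ[X]) ^ m =
      ∑ i ∈ Finset.range (m + 1), C ((-1) ^ i * (m.choose i : ℤ)) * X ^ (2 * i) := by
    rw [sub_eq_add_neg, add_comm, add_pow]
    refine Finset.sum_congr rfl fun i _ => ?_
    rw [one_pow, mul_one, neg_pow, ← pow_mul, map_mul, map_pow, map_neg, map_one,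
      C_eq_natCast]
    ring
  rw [h, finset_sum_coeff]
  simp only [coeff_C_mul, coeff_X_pow]
  rw [Finset.sum_eq_single (k / 2)]
  · by_cases hk : k % 2 = 0
    · rw [if_pos hk, if_pos (by omega)]
      simp
    · rw [if_neg hk, if_neg (by omega)]
      simp
  · intro i _ hi
    rw [if_neg (by omega)]
    simp
  · intro h2
    simp only [Finset.mem_range, not_lt] at h2
    rw [Nat.choose_eq_zero_of_lt (by omega)]
    simp

theorem stmt_8 (p : ℕ) (hp : 0 < p) :
    (2 * (p : ℤ) - 1) * kravchuk (2 * p + 1) (2 * p + 1) (4 * p - 1) =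
        (3 - 2 * (p : ℤ)) * ((-1) ^ p * ((2 * p - 1).choose p)) ∧
    kravchuk (2 * p + 1) (2 * p + 1) (4 * p) = -(2 * (-1) ^ p * ((2 * p - 1).choose p)) ∧
    kravchuk (2 * p + 1) (2 * p + 1) (4 * p + 1) =
        -(2 * (-1) ^ p * ((2 * p - 1).choose p)) ∧
    kravchuk (2 * p + 1) (2 * p + 1) (4 * p + 2) = 0 := by
  obtain ⟨q, rfl⟩ : ∃ q, p = q + 1 := ⟨p - 1, by omega⟩
  have hfact : ((1 : ℤ[X]) - X ^ 2) = (1 + X) * (1 - X) := by ring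
  set D0 : ℤ[X] := (1 - X ^ 2) ^ (2 * q) with hD0
  set D1 : ℤ[X] := (1 - X ^ 2) ^ (2 * q + 1) with hD1
  set D2 : ℤ[X] := (1 - X ^ 2) ^ (2 * q + 2) with hD2
  have idx : 2 * (q + 1) + 1 = 2 * q + 3 := by omega
  refine ⟨?_, ?_, ?_, ?_⟩
  · -- n = 4p - 1 = 4q + 3, exponent n - b = 2q
    have hexp : 4 * (q + 1) - 1 - (2 * (q + 1) + 1) = 2 * q := by omega
    have key : (1 + X : ℤ[X]) ^ (2 * q) * (1 - X) ^ (2 * q + 3)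
        = D0 - C 3 * (D0 * X) + C 3 * (D0 * X ^ 2) - D0 * X ^ 3 := by
      rw [hD0, hfact, mul_pow]
      simp only [map_ofNat]
      ring
    have c1 : D0.coeff (2 * q + 3) = 0 := by
      rw [hD0, coeff_one_sub_X_sq_pow, if_neg (by omega)]
    have c2 : (D0 * X).coeff (2 * q + 3) = (-1) ^ (q + 1) * ((2 * q).choose (q + 1) : ℤ) := by
      rw [show 2 * q + 3 = (2 * q + 2) + 1 from rfl, coeff_mul_X, hD0,
        coeff_one_sub_X_sq_pow, if_pos (by omega), show (2 * q + 2) / 2 = q + 1 by omega]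
    have c3 : (D0 * X ^ 2).coeff (2 * q + 3) = 0 := by
      rw [show 2 * q + 3 = (2 * q + 1) + 2 from rfl, coeff_mul_X_pow, hD0,
        coeff_one_sub_X_sq_pow, if_neg (by omega)]
    have c4 : (D0 * X ^ 3).coeff (2 * q + 3) = (-1) ^ q * ((2 * q).choose q : ℤ) := by
      rw [show 2 * q + 3 = (2 * q) + 3 from rfl, coeff_mul_X_pow, hD0,
        coeff_one_sub_X_sq_pow, if_pos (by omega), show (2 * q) / 2 = q by omega]
    have hcs : ((2 * q + 1).choose (q + 1) : ℤ)
        = (2 * q).choose q + (2 * q).choose (q + 1) := by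
      rw [Nat.choose_succ_succ]; push_cast; ring
    have hid : ((2 * q).choose (q + 1) : ℤ) * (q + 1) = ((2 * q).choose q : ℤ) * q := by
      have := Nat.choose_succ_right_eq (2 * q) q
      rw [show 2 * q - q = q by omega] at this
      exact_mod_cast congrArg (Nat.cast (R := ℤ)) this
    rw [show kravchuk (2 * (q + 1) + 1) (2 * (q + 1) + 1) (4 * (q + 1) - 1)
        = ((1 + X : ℤ[X]) ^ (2 * q) * (1 - X) ^ (2 * (q + 1) + 1)).coeff (2 * (q + 1) + 1) from
        by rw [kravchuk, hexp], idx, key, coeff_sub, coeff_add, coeff_sub, coeff_C_mul,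
      coeff_C_mul, c1, c2, c3, c4, show 2 * (q + 1) - 1 = 2 * q + 1 by omega, hcs]
    push_cast
    linear_combination (-4 : ℤ) * (-1) ^ (q + 1) * hid
  · -- n = 4p = 4q + 4, exponent 2q + 1
    have hexp : 4 * (q + 1) - (2 * (q + 1) + 1) = 2 * q + 1 := by omega
    have key : (1 + X : ℤ[X]) ^ (2 * q + 1) * (1 - X) ^ (2 * q + 3)
        = D1 - C 2 * (D1 * X) + D1 * X ^ 2 := by
      rw [hD1, hfact, mul_pow]; simp only [map_ofNat]; ring
    have c1 : D1.coeff (2 * q + 3) = 0 := by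
      rw [hD1, coeff_one_sub_X_sq_pow, if_neg (by omega)]
    have c2 : (D1 * X).coeff (2 * q + 3) = (-1) ^ (q + 1) * ((2 * q + 1).choose (q + 1) : ℤ) := by
      rw [show 2 * q + 3 = (2 * q + 2) + 1 from rfl, coeff_mul_X, hD1,
        coeff_one_sub_X_sq_pow, if_pos (by omega), show (2 * q + 2) / 2 = q + 1 by omega]
    have c3 : (D1 * X ^ 2).coeff (2 * q + 3) = 0 := by
      rw [show 2 * q + 3 = (2 * q + 1) + 2 from rfl, coeff_mul_X_pow, hD1,
        coeff_one_sub_X_sq_pow, if_neg (by omega)]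
    rw [show kravchuk (2 * (q + 1) + 1) (2 * (q + 1) + 1) (4 * (q + 1))
        = ((1 + X : ℤ[X]) ^ (2 * q + 1) * (1 - X) ^ (2 * (q + 1) + 1)).coeff (2 * (q + 1) + 1)
        from by rw [kravchuk, hexp], idx, key, coeff_add, coeff_sub, coeff_C_mul, c1, c2, c3,
      show 2 * (q + 1) - 1 = 2 * q + 1 by omega]
    ring
  · -- n = 4p + 1 = 4q + 5, exponent 2q + 2
    have hexp : 4 * (q + 1) + 1 - (2 * (q + 1) + 1) = 2 * q + 2 := by omega
    have key : (1 + X : ℤ[X]) ^ (2 * q + 2) * (1 - X) ^ (2 * q + 3)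
        = D2 - D2 * X := by
      rw [hD2, hfact, mul_pow]; ring
    have c1 : D2.coeff (2 * q + 3) = 0 := by
      rw [hD2, coeff_one_sub_X_sq_pow, if_neg (by omega)]
    have c2 : (D2 * X).coeff (2 * q + 3) = (-1) ^ (q + 1) * ((2 * q + 2).choose (q + 1) : ℤ) := by
      rw [show 2 * q + 3 = (2 * q + 2) + 1 from rfl, coeff_mul_X, hD2,
        coeff_one_sub_X_sq_pow, if_pos (by omega), show (2 * q + 2) / 2 = q + 1 by omega]
    have hch : ((2 * q + 2).choose (q + 1) : ℤ) = 2 * ((2 * q + 1).choose (q + 1) : ℤ) := by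
      have h1 : (2 * q + 2).choose (q + 1) = (2 * q + 1).choose q + (2 * q + 1).choose (q + 1) :=
        Nat.choose_succ_succ _ _
      have h2 : (2 * q + 1).choose q = (2 * q + 1).choose (q + 1) := by
        have := Nat.choose_symm (n := 2 * q + 1) (k := q + 1) (by omega)
        rwa [show 2 * q + 1 - (q + 1) = q by omega] at this
      rw [h1, h2]; push_cast; ring
    rw [show kravchuk (2 * (q + 1) + 1) (2 * (q + 1) + 1) (4 * (q + 1) + 1)
        = ((1 + X : ℤ[X]) ^ (2 * q + 2) * (1 - X) ^ (2 * (q + 1) + 1)).coeff (2 * (q + 1) + 1)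
        from by rw [kravchuk, hexp], idx, key, coeff_sub, c1, c2,
      show 2 * (q + 1) - 1 = 2 * q + 1 by omega, hch]
    ring
  · -- n = 4p + 2 = 4q + 6, exponent 2q + 3
    have hexp : 4 * (q + 1) + 2 - (2 * (q + 1) + 1) = 2 * q + 3 := by omega
    have key : (1 + X : ℤ[X]) ^ (2 * q + 3) * (1 - X) ^ (2 * q + 3)
        = (1 - X ^ 2) ^ (2 * q + 3) := by
      rw [hfact, mul_pow]
    rw [show kravchuk (2 * (q + 1) + 1) (2 * (q + 1) + 1) (4 * (q + 1) + 2)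
        = ((1 + X : ℤ[X]) ^ (2 * q + 3) * (1 - X) ^ (2 * (q + 1) + 1)).coeff (2 * (q + 1) + 1)
        from by rw [kravchuk, hexp], idx, key, coeff_one_sub_X_sq_pow, if_neg (by omega)]
end
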